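/- arXiv:1809.06292 — 3 statements merged into one kernel-verified Lean document; each statement's English description precedes it below -/
import Mathlib

section
/- For 0 < γ < 1, the function ψ(z) = z^{-γ} / (z^{1-γ} - (z-1)^{1-γ}) is monotonically increasing on (1, ∞). -/
/-! Substituting `t = 1 - z⁻¹`, which increases from `0` to `1` on `(1, ∞)`, gives
`ψ z = (1 - t) / (1 - t ^ (1 - γ))`, the reciprocal of the slope of the concave map
`x ↦ x ^ (1 - γ)` between `t` and `1`. Secant slopes of a concave function decrease as the
moving endpoint increases, so `ψ` increases. -/

open Real Set

lemma antitoneOn_slope_rpow_one {p : ℝ} (hp₀ : 0 ≤ p) (hp₁ : p ≤ 1) :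
    AntitoneOn (slope (fun x : ℝ ↦ x ^ p) 1) (Ico 0 1) :=
  ((concaveOn_rpow hp₀ hp₁).antitoneOn_slope_lt (mem_Ici.mpr zero_le_one)).mono
    fun _ ht ↦ ⟨ht.1, ht.2⟩

lemma slope_rpow_one_pos {p : ℝ} (hp : 0 < p) {t : ℝ} (ht₀ : 0 ≤ t) (ht₁ : t < 1) :
    0 < slope (fun x : ℝ ↦ x ^ p) 1 t := by
  rw [slope_def_field, one_rpow]
  exact div_pos_of_neg_of_neg (sub_neg.mpr (rpow_lt_one ht₀ ht₁ hp)) (sub_neg.mpr ht₁)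

lemma one_sub_inv_mem_Ico {z : ℝ} (hz : 1 < z) : 1 - z⁻¹ ∈ Ico 0 1 :=
  ⟨sub_nonneg.mpr (inv_le_one_of_one_le₀ hz.le), sub_lt_self 1 (inv_pos.mpr (by linarith))⟩

lemma rpow_neg_div_sub_rpow_eq_inv_slope (γ : ℝ) {z : ℝ} (hz : 1 < z) :
    z ^ (-γ) / (z ^ (1 - γ) - (z - 1) ^ (1 - γ)) =
      (slope (fun x : ℝ ↦ x ^ (1 - γ)) 1 (1 - z⁻¹))⁻¹ := by
  have hz₀ : 0 < z := by linarith
  have hslope : slope (fun x : ℝ ↦ x ^ (1 - γ)) 1 (1 - z⁻¹) =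
      z ^ γ * (z ^ (1 - γ) - (z - 1) ^ (1 - γ)) := by
    have ht : 1 - z⁻¹ = (z - 1) / z := by field_simp
    rw [slope_def_field, one_rpow, ht, div_rpow (by linarith) hz₀.le, rpow_sub hz₀, rpow_one]
    have : 0 < z ^ γ := rpow_pos_of_pos hz₀ γ
    field_simp
    ring
  rw [hslope, mul_inv, rpow_neg hz₀.le, div_eq_mul_inv]

theorem psi_monotone (γ : ℝ) (hγ0 : 0 < γ) (hγ1 : γ < 1)
    (ψ : ℝ → ℝ)
    (hψ : ∀ z : ℝ, 1 < z → ψ z = z ^ (-γ) / (z ^ (1 - γ) - (z - 1) ^ (1 - γ))) :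
    MonotoneOn ψ (Set.Ioi 1) := by
  intro x (hx : 1 < x) y (hy : 1 < y) hxy
  rw [hψ x hx, hψ y hy, rpow_neg_div_sub_rpow_eq_inv_slope γ hx,
    rpow_neg_div_sub_rpow_eq_inv_slope γ hy]
  have hy_mem := one_sub_inv_mem_Ico hy
  refine inv_anti₀ (slope_rpow_one_pos (by linarith) hy_mem.1 hy_mem.2) ?_
  exact antitoneOn_slope_rpow_one (by linarith) (by linarith) (one_sub_inv_mem_Ico hx) hy_mem
    (by gcongr)
end

section
/- Suppose a nonnegative sequence (e_p)_{p≥1} satisfies: e_1 ≤ C·b_0^{-1}·Δt², and for each p ≥ 1, e_{p+1} ≤ (1-b_1)e_p + Σ_{j=1}^{p-1}(b_j - b_{j+1})e_{p-j} + C·Δt², where b_j = (j+1)^{1-γ} - j^{1-γ}, 0 < γ < 1, C ≥ 0, Δt > 0. Then e_p ≤ C·b_{p-1}^{-1}·Δt² for all p ≥ 1. -/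
/-!
Concavity of `x ↦ x ^ (1 - γ)` makes `b` positive, antitone and bounded by `b 0 ≤ 1`, so all
coefficients of the recursion are nonnegative and they telescope: `(1 - b 1) + ∑ (b j - b (j+1))
= 1 - b p`. By strong induction every earlier `e q` is at most `C Δt² / b (p-1)`, hence
`e (p+1) ≤ (1 - b p) C Δt² / b (p-1) + C Δt² ≤ C Δt² / b p`, the last step being
`(b (p-1) - b p)(1 - b p) ≥ 0`.
-/

open Set

theorem ConcaveOn.antitone_add_one_sub {f : ℝ → ℝ} (hf : ConcaveOn ℝ (Ici 0) f) :
    Antitone fun j : ℕ => f ((j : ℝ) + 1) - f j := by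
  refine antitone_nat_of_succ_le fun j => ?_
  have h := hf.slope_anti_adjacent (x := j) (y := j + 1) (z := j + 1 + 1)
    (mem_Ici.mpr (Nat.cast_nonneg j)) (mem_Ici.mpr (by positivity)) (by linarith) (by linarith)
  norm_num at h
  push_cast
  linarith

theorem sum_Icc_sub_one_sub_add_one (b : ℕ → ℝ) {p : ℕ} (hp : 1 ≤ p) :
    ∑ j ∈ Finset.Icc 1 (p - 1), (b j - b (j + 1)) = b 1 - b p := by
  rw [Finset.Icc_sub_one_right_eq_Ico_of_not_isMin (by simpa using Nat.one_le_iff_ne_zero.mp hp),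
    ← neg_sub, ← Finset.sum_Ico_sub b hp, ← Finset.sum_neg_distrib]
  simp only [neg_sub]

theorem one_sub_mul_mul_inv_add_le_mul_inv {x y M : ℝ} (hM : 0 ≤ M) (hy : 0 < y) (hyx : y ≤ x)
    (hy1 : y ≤ 1) : (1 - y) * (M * x⁻¹) + M ≤ M * y⁻¹ := by
  have hx : 0 < x := hy.trans_le hyx
  have key : (1 - y) * x⁻¹ + 1 ≤ y⁻¹ := by
    rw [← sub_nonneg]
    have : y⁻¹ - ((1 - y) * x⁻¹ + 1) = (x - y) * (1 - y) / (x * y) := by field_simp; ring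
    rw [this]
    exact div_nonneg (mul_nonneg (by linarith) (by linarith)) (by positivity)
  calc (1 - y) * (M * x⁻¹) + M = ((1 - y) * x⁻¹ + 1) * M := by ring
    _ ≤ y⁻¹ * M := by gcongr
    _ = M * y⁻¹ := mul_comm _ _

section Recursion

variable {b e : ℕ → ℝ} {M : ℝ}

theorem recursion_rhs_le (hb : Antitone b) (hb0 : b 0 ≤ 1) {p : ℕ} (hp : 1 ≤ p) {K : ℝ}
    (hK : ∀ q, 1 ≤ q → q ≤ p → e q ≤ K) :
    (1 - b 1) * e p + ∑ j ∈ Finset.Icc 1 (p - 1), (b j - b (j + 1)) * e (p - j) + M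
      ≤ (1 - b p) * K + M := by
  have hsum : ∑ j ∈ Finset.Icc 1 (p - 1), (b j - b (j + 1)) * e (p - j)
      ≤ ∑ j ∈ Finset.Icc 1 (p - 1), (b j - b (j + 1)) * K := by
    refine Finset.sum_le_sum fun j hj => ?_
    rw [Finset.mem_Icc] at hj
    exact mul_le_mul_of_nonneg_left (hK _ (by omega) (by omega))
      (sub_nonneg.mpr (hb j.le_succ))
  have hep : (1 - b 1) * e p ≤ (1 - b 1) * K :=
    mul_le_mul_of_nonneg_left (hK p hp le_rfl) (by linarith [hb (zero_le_one' ℕ)])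
  rw [← Finset.sum_mul, sum_Icc_sub_one_sub_add_one b hp] at hsum
  linarith

theorem le_mul_inv_of_le_recursion (hb : Antitone b) (hb_pos : ∀ j, 0 < b j) (hb0 : b 0 ≤ 1)
    (hM : 0 ≤ M) (h1 : e 1 ≤ M * (b 0)⁻¹)
    (hrec : ∀ p, 1 ≤ p →
      e (p + 1) ≤ (1 - b 1) * e p + ∑ j ∈ Finset.Icc 1 (p - 1), (b j - b (j + 1)) * e (p - j) + M) :
    ∀ p, 1 ≤ p → e p ≤ M * (b (p - 1))⁻¹ := by
  intro p
  induction p using Nat.strong_induction_on with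
  | _ p ih =>
  intro hp
  obtain rfl | ⟨p, hp1, rfl⟩ : p = 1 ∨ ∃ q, 1 ≤ q ∧ p = q + 1 :=
    by rcases p with _ | _ | q <;> simp_all
  · exact h1
  have hbound : ∀ q, 1 ≤ q → q ≤ p → e q ≤ M * (b (p - 1))⁻¹ := fun q hq hqp =>
    (ih q (by omega) hq).trans <| mul_le_mul_of_nonneg_left
      ((inv_le_inv₀ (hb_pos _) (hb_pos _)).mpr (hb (by omega))) hM
  calc e (p + 1) ≤ (1 - b p) * (M * (b (p - 1))⁻¹) + M :=
        (hrec p hp1).trans (recursion_rhs_le hb hb0 hp1 hbound)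
    _ ≤ M * (b p)⁻¹ :=
        one_sub_mul_mul_inv_add_le_mul_inv hM (hb_pos p) (hb (by omega)) ((hb p.zero_le).trans hb0)

end Recursion

theorem error_recursion_bound_general (γ : ℝ) (hγ0 : 0 < γ) (hγ1 : γ < 1)
    (C Δt : ℝ) (hC : 0 ≤ C)
    (b : ℕ → ℝ) (hb : ∀ j : ℕ, b j = ((j : ℝ) + 1) ^ (1 - γ) - (j : ℝ) ^ (1 - γ))
    (e : ℕ → ℝ)
    (h1 : e 1 ≤ C * (b 0)⁻¹ * Δt ^ 2)
    (hrec : ∀ p : ℕ, 1 ≤ p →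
      e (p + 1) ≤ (1 - b 1) * e p
        + (∑ j ∈ Finset.Icc 1 (p - 1), (b j - b (j + 1)) * e (p - j))
        + C * Δt ^ 2) :
    ∀ p : ℕ, 1 ≤ p → e p ≤ C * (b (p - 1))⁻¹ * Δt ^ 2 := by
  have hb_anti : Antitone b := by
    rw [funext hb]
    exact (Real.concaveOn_rpow (by linarith) (by linarith)).antitone_add_one_sub
  have hb_pos (j : ℕ) : 0 < b j := by
    rw [hb, sub_pos]
    exact Real.rpow_lt_rpow (Nat.cast_nonneg j) (lt_add_one _) (by linarith)
  have hb0 : b 0 ≤ 1 := by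
    rw [hb]
    simpa using Real.rpow_nonneg le_rfl (1 - γ)
  intro p hp
  rw [mul_right_comm] at h1 ⊢
  exact le_mul_inv_of_le_recursion hb_anti hb_pos hb0 (by positivity) h1 hrec p hp

theorem error_recursion_bound (γ : ℝ) (hγ0 : 0 < γ) (hγ1 : γ < 1)
    (C Δt : ℝ) (hC : 0 ≤ C) (hΔt : 0 < Δt)
    (b : ℕ → ℝ) (hb : ∀ j : ℕ, b j = ((j : ℝ) + 1) ^ (1 - γ) - (j : ℝ) ^ (1 - γ))
    (e : ℕ → ℝ) (he : ∀ p : ℕ, 1 ≤ p → 0 ≤ e p)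
    (h1 : e 1 ≤ C * (b 0)⁻¹ * Δt ^ 2)
    (hrec : ∀ p : ℕ, 1 ≤ p →
      e (p + 1) ≤ (1 - b 1) * e p
        + (∑ j ∈ Finset.Icc 1 (p - 1), (b j - b (j + 1)) * e (p - j))
        + C * Δt ^ 2) :
    ∀ p : ℕ, 1 ≤ p → e p ≤ C * (b (p - 1))⁻¹ * Δt ^ 2 :=
  error_recursion_bound_general γ hγ0 hγ1 C Δt hC b hb e h1 hrec
end

section
/- If an error bound satisfies e_p ≤ C·b_{p-1}^{-1}·Δt² for all p with p·Δt ≤ T, where b_j = (j+1)^{1-γ} - j^{1-γ} and 0 < γ < 1, then e_p ≤ (C/(1-γ))·T^γ·Δt^{2-γ} for all such p. -/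
theorem error_final_bound (γ : ℝ) (hγ0 : 0 < γ) (hγ1 : γ < 1)
    (C Δt T : ℝ) (hC : 0 ≤ C) (hΔt : 0 < Δt) (hT : 0 < T)
    (b : ℕ → ℝ) (hb : ∀ j : ℕ, b j = ((j : ℝ) + 1) ^ (1 - γ) - (j : ℝ) ^ (1 - γ))
    (e : ℕ → ℝ) (he : ∀ p : ℕ, 1 ≤ p → 0 ≤ e p)
    (hbound : ∀ p : ℕ, 1 ≤ p → (p : ℝ) * Δt ≤ T → e p ≤ C * (b (p - 1))⁻¹ * Δt ^ 2) :
    ∀ p : ℕ, 1 ≤ p → (p : ℝ) * Δt ≤ T →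
      e p ≤ (C / (1 - γ)) * T ^ γ * Δt ^ (2 - γ) := by
  intro p hp hpT
  have hx1 : (1 : ℝ) ≤ (p : ℝ) := by exact_mod_cast hp
  have hx0 : (0 : ℝ) < (p : ℝ) := lt_of_lt_of_le one_pos hx1
  set x : ℝ := (p : ℝ) with hxdef
  have h1γ : 0 < 1 - γ := by linarith
  -- cast of p - 1
  have hcast : ((p - 1 : ℕ) : ℝ) = x - 1 := by
    have := Nat.cast_sub hp (R := ℝ)
    simpa using this
  have hbp : b (p - 1) = x ^ (1 - γ) - (x - 1) ^ (1 - γ) := by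
    rw [hb, hcast]; ring_nf
  -- Bernoulli: (1 - 1/x)^(1-γ) ≤ 1 - (1-γ)/x
  have hs : (-1 : ℝ) ≤ -1 / x := by
    rw [neg_div]
    have : 1 / x ≤ 1 := by
      rw [div_le_one hx0]; exact hx1
    linarith
  have hbern := rpow_one_add_le_one_add_mul_self hs (le_of_lt h1γ) (by linarith : 1 - γ ≤ 1)
  -- hbern : (1 + (-1/x)) ^ (1-γ) ≤ 1 + (1-γ) * (-1/x)
  have hnn : (0:ℝ) ≤ 1 + -1 / x := by
    have h : (-1:ℝ) / x = -(1 / x) := by ring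
    have h2 : 1 / x ≤ 1 := by rw [div_le_one hx0]; exact hx1
    rw [h]; linarith
  have hfact : (x - 1) ^ (1 - γ) = x ^ (1 - γ) * (1 + -1 / x) ^ (1 - γ) := by
    rw [← Real.mul_rpow (le_of_lt hx0) hnn]
    congr 1
    field_simp
    ring
  have hkey : (1 - γ) * x ^ (-γ) ≤ b (p - 1) := by
    rw [hbp, hfact]
    have h2 : x ^ (1 - γ) * (1 + -1 / x) ^ (1 - γ) ≤ x ^ (1 - γ) * (1 + (1 - γ) * (-1 / x)) :=
      mul_le_mul_of_nonneg_left hbern (Real.rpow_nonneg (le_of_lt hx0) _)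
    have h3 : x ^ (1 - γ) * (1 + (1 - γ) * (-1 / x)) = x ^ (1 - γ) - (1 - γ) * (x ^ (1 - γ) / x) := by
      ring
    have hinv : x ^ (-1 : ℝ) = x⁻¹ := by
      rw [Real.rpow_neg (le_of_lt hx0), Real.rpow_one]
    have h4 : x ^ (1 - γ) / x = x ^ (-γ) := by
      calc x ^ (1 - γ) / x = x ^ (1 - γ) * x ^ (-1 : ℝ) := by rw [hinv]; ring
        _ = x ^ (1 - γ + -1) := (Real.rpow_add hx0 _ _).symm
        _ = x ^ (-γ) := by ring_nf
    rw [h3, h4] at h2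
    linarith
  have hbpos : 0 < (1 - γ) * x ^ (-γ) := by positivity
  have hbinv : (b (p - 1))⁻¹ ≤ x ^ γ / (1 - γ) := by
    have := inv_anti₀ hbpos hkey
    rw [mul_inv, ← Real.rpow_neg (le_of_lt hx0), neg_neg] at this
    calc (b (p-1))⁻¹ ≤ (1 - γ)⁻¹ * x ^ γ := this
      _ = x ^ γ / (1 - γ) := by ring
  calc e p ≤ C * (b (p - 1))⁻¹ * Δt ^ 2 := hbound p hp hpT
    _ ≤ C * (x ^ γ / (1 - γ)) * Δt ^ 2 := by
        apply mul_le_mul_of_nonneg_right (mul_le_mul_of_nonneg_left hbinv hC) (by positivity)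
    _ = (C / (1 - γ)) * (x ^ γ * Δt ^ γ) * Δt ^ (2 - γ) := by
        have : (Δt : ℝ) ^ (2 : ℕ) = Δt ^ γ * Δt ^ (2 - γ) := by
          rw [← Real.rpow_add hΔt, ← Real.rpow_natCast Δt 2]
          norm_num
        rw [this]; ring
    _ ≤ (C / (1 - γ)) * T ^ γ * Δt ^ (2 - γ) := by
        have hxt : x ^ γ * Δt ^ γ = (x * Δt) ^ γ := by
          rw [Real.mul_rpow (le_of_lt hx0) (le_of_lt hΔt)]
        rw [hxt]
        have h5 : (x * Δt) ^ γ ≤ T ^ γ :=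
          Real.rpow_le_rpow (by positivity) hpT (le_of_lt hγ0)
        apply mul_le_mul_of_nonneg_right (mul_le_mul_of_nonneg_left h5 (by positivity)) (by positivity)
end
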